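/- arXiv:1809.00901 — 3 statements merged into one kernel-verified Lean document; each statement's English description precedes it below -/
import Mathlib

section
/- Let k, s, d be integers with 1 ≤ s ≤ k−1 and 1 ≤ d ≤ k−1. Set β = ⌈max{(k−d+1)/(2d+1), (d+1)/(2(k−d)+1)}⌉ and α = max{(k−d+1)/d, (d+1)/(k−d)}. Then the odd-intersection sum J_d = Σ_{i ≤ d, i odd} C(s,i)·C(k−s, d−i) satisfies: J_d ≥ (2s/(5α))·C(k,d) when s < β; J_d ≥ (1/5)·C(k,d) when β ≤ s ≤ k−β; and J_d ≥ (2(k−s)/(5α))·C(k,d) when s > k−β. -/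
open Finset

/-- `J_d = Σ_{i ≤ d, i odd} C(s,i)·C(k−s, d−i)`. -/
def oddSum (k s d : ℕ) : ℕ :=
  ∑ i ∈ Finset.range (d + 1), if Odd i then s.choose i * (k - s).choose (d - i) else 0

lemma sqstep (x y P m : ℕ) (h1 : P ≤ 12*m) (h2 : x*y = m*P) : P ≤ 2*x + 2*y := by
  have hsq := two_mul_le_add_sq x y
  have hPP : P*P ≤ (2*x+2*y)*(2*x+2*y) := by
    nlinarith [mul_le_mul_left h1 P, h2, hsq]
  exact Nat.mul_self_le_mul_self_iff.mp hPP

/-- Core arithmetic for the middle-case interior pairing. -/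
lemma core2 (i v p q : ℕ) (hi : 2 ≤ i) (hv : 1 ≤ v)
    (h1 : i + v + 1 ≤ (i + p) * (2 * (p + q) + 1))
    (h2 : i + v + 1 ≤ (v + q) * (2 * (p + q) + 1)) :
    (i+1)*(p+1)*(v+1)*(q+1) ≤ 2*(i*q*(i+1)*(q+1)) + 2*(p*v*(p+1)*(v+1)) := by
  rcases Nat.eq_zero_or_pos p with hp | hp
  · subst hp
    rcases Nat.eq_zero_or_pos q with hq | hq
    · subst hq
      simp only [Nat.add_zero, Nat.mul_one] at h1
      omega
    · have hr : (i+0) * (2*(0+q)+1) = 2*(i*q) + i := by ring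
      rw [hr] at h1
      have hkey : v + 1 ≤ 2*(i*q) := by omega
      nlinarith [mul_le_mul_left hkey ((i+1)*(q+1))]
  · rcases Nat.eq_zero_or_pos q with hq | hq
    · subst hq
      have hr : (v+0) * (2*(p+0)+1) = 2*(p*v) + v := by ring
      rw [hr] at h2
      have hkey : i + 1 ≤ 2*(p*v) := by omega
      nlinarith [mul_le_mul_left hkey ((p+1)*(v+1))]
    · -- both p,q ≥ 1 : square trick
      have a1 : 2*(i+1) ≤ 3*i := by omega
      have a2 : p+1 ≤ 2*p := by omega
      have a3 : v+1 ≤ 2*v := by omega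
      have a4 : q+1 ≤ 2*q := by omega
      have hchain : (2*(i+1))*((p+1)*((v+1)*(q+1))) ≤ (3*i)*((2*p)*((2*v)*(2*q))) :=
        Nat.mul_le_mul a1 (Nat.mul_le_mul a2 (Nat.mul_le_mul a3 a4))
      have hP : (i+1)*(p+1)*(v+1)*(q+1) ≤ 12*(i*v*p*q) := by
        have e1 : (2*(i+1))*((p+1)*((v+1)*(q+1))) = 2*((i+1)*(p+1)*(v+1)*(q+1)) := by ring
        have e2 : (3*i)*((2*p)*((2*v)*(2*q))) = 2*(12*(i*v*p*q)) := by ring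
        rw [e1, e2] at hchain
        omega
      have hxy : (i*q*(i+1)*(q+1)) * (p*v*(p+1)*(v+1)) = (i*v*p*q) * ((i+1)*(p+1)*(v+1)*(q+1)) := by
        ring
      exact sqstep _ _ _ _ hP hxy

/-- Core arithmetic for the small-s case interior bound. -/
lemma core1 (i v p q : ℕ) (hi : 1 ≤ i) (hv : 1 ≤ v)
    (H : (i+p)*(2*(i+v)+1) ≤ p+q ∨ (i+p)*(2*(p+q)+1) ≤ i+v) :
    (i+v)*(i+p)*((i+1)*(p+1)*(v+1)*(q+1)) ≤ ((p+q)+1)*((i*q*(i+1)*(q+1)) + (p*v*(p+1)*(v+1)))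
    ∨ (p+q)*(i+p)*((i+1)*(p+1)*(v+1)*(q+1)) ≤ ((i+v)+1)*((i*q*(i+1)*(q+1)) + (p*v*(p+1)*(v+1))) := by
  rcases H with H | H
  · left
    set M := (i+p)*(i+v) with hM
    have hr : (i+p)*(2*(i+v)+1) = 2*M + (i+p) := by rw [hM]; ring
    rw [hr] at H
    have hq : 2*M ≤ q := by omega
    have h44 : (2*M)*(2*M) ≤ q*q := Nat.mul_le_mul hq hq
    have hiq : q ≤ i*q := Nat.le_mul_of_pos_left q hi
    have hR : q*q ≤ ((p+q)+1)*(i*q) := Nat.mul_le_mul (by omega) hiq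
    have c1 : (p+1)*(v+1) ≤ (2*(i+p))*(2*(i+v)) := Nat.mul_le_mul (by omega) (by omega)
    have hL : (i+v)*(i+p)*((p+1)*(v+1)) ≤ 4*(M*M) := by
      calc (i+v)*(i+p)*((p+1)*(v+1)) ≤ (i+v)*(i+p)*((2*(i+p))*(2*(i+v))) :=
            Nat.mul_le_mul_left _ c1
        _ = 4*(M*M) := by rw [hM]; ring
    have hcen : (i+v)*(i+p)*((p+1)*(v+1)) ≤ ((p+q)+1)*(i*q) := by
      have : 4*(M*M) = (2*M)*(2*M) := by ring
      omega
    calc (i+v)*(i+p)*((i+1)*(p+1)*(v+1)*(q+1))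
        = ((i+v)*(i+p)*((p+1)*(v+1))) * ((i+1)*(q+1)) := by ring
      _ ≤ (((p+q)+1)*(i*q)) * ((i+1)*(q+1)) := Nat.mul_le_mul_right _ hcen
      _ = ((p+q)+1)*(i*q*(i+1)*(q+1)) := by ring
      _ ≤ ((p+q)+1)*((i*q*(i+1)*(q+1)) + (p*v*(p+1)*(v+1))) :=
            Nat.mul_le_mul_left _ (Nat.le_add_right _ _)
  · right
    rcases Nat.eq_zero_or_pos p with hp | hp
    · subst hp
      have e0 : (0+q)*(i+0)*((i+1)*(0+1)*(v+1)*(q+1)) = (v+1)*(i*q*(i+1)*(q+1)) := by ring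
      rw [e0]
      calc (v+1)*(i*q*(i+1)*(q+1)) ≤ ((i+v)+1)*(i*q*(i+1)*(q+1)) :=
            Nat.mul_le_mul_right _ (by omega)
        _ ≤ ((i+v)+1)*((i*q*(i+1)*(q+1)) + (0*v*(0+1)*(v+1))) :=
            Nat.mul_le_mul_left _ (Nat.le_add_right _ _)
    · set N := (i+p)*(p+q) with hN
      have hr : (i+p)*(2*(p+q)+1) = 2*N + (i+p) := by rw [hN]; ring
      rw [hr] at H
      have hv2 : 2*N ≤ v := by omega
      have h44 : (2*N)*(2*N) ≤ v*v := Nat.mul_le_mul hv2 hv2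
      have hpv : v ≤ p*v := Nat.le_mul_of_pos_left v hp
      have hR : v*v ≤ ((i+v)+1)*(p*v) := Nat.mul_le_mul (by omega) hpv
      have c1 : (i+1)*(q+1) ≤ (2*(i+p))*(2*(p+q)) := Nat.mul_le_mul (by omega) (by omega)
      have hL : (p+q)*(i+p)*((i+1)*(q+1)) ≤ 4*(N*N) := by
        calc (p+q)*(i+p)*((i+1)*(q+1)) ≤ (p+q)*(i+p)*((2*(i+p))*(2*(p+q))) :=
              Nat.mul_le_mul_left _ c1
          _ = 4*(N*N) := by rw [hN]; ring
      have hcen : (p+q)*(i+p)*((i+1)*(q+1)) ≤ ((i+v)+1)*(p*v) := by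
        have : 4*(N*N) = (2*N)*(2*N) := by ring
        omega
      calc (p+q)*(i+p)*((i+1)*(p+1)*(v+1)*(q+1))
          = ((p+q)*(i+p)*((i+1)*(q+1))) * ((p+1)*(v+1)) := by ring
        _ ≤ (((i+v)+1)*(p*v)) * ((p+1)*(v+1)) := Nat.mul_le_mul_right _ hcen
        _ = ((i+v)+1)*(p*v*(p+1)*(v+1)) := by ring
        _ ≤ ((i+v)+1)*((i*q*(i+1)*(q+1)) + (p*v*(p+1)*(v+1))) :=
            Nat.mul_le_mul_left _ (Nat.le_add_left _ _)

/-- Core arithmetic for the small-t case interior bound (mirror of `core1`). -/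
lemma core3 (i v p q : ℕ) (hi : 1 ≤ i) (hv : 1 ≤ v)
    (H : (v+q)*(2*(i+v)+1) ≤ p+q ∨ (v+q)*(2*(p+q)+1) ≤ i+v) :
    (i+v)*(v+q)*((i+1)*(p+1)*(v+1)*(q+1)) ≤ ((p+q)+1)*((i*q*(i+1)*(q+1)) + (p*v*(p+1)*(v+1)))
    ∨ (p+q)*(v+q)*((i+1)*(p+1)*(v+1)*(q+1)) ≤ ((i+v)+1)*((i*q*(i+1)*(q+1)) + (p*v*(p+1)*(v+1))) := by
  have H' : (v+q)*(2*(v+i)+1) ≤ q+p ∨ (v+q)*(2*(q+p)+1) ≤ v+i := by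
    rcases H with H | H
    · left
      have e : (v+q)*(2*(v+i)+1) = (v+q)*(2*(i+v)+1) := by ring
      rw [e]; omega
    · right
      have e : (v+q)*(2*(q+p)+1) = (v+q)*(2*(p+q)+1) := by ring
      rw [e]; omega
  rcases core1 v i q p hv hi H' with h | h
  · left
    have e1 : (i+v)*(v+q)*((i+1)*(p+1)*(v+1)*(q+1))
        = (v+i)*(v+q)*((v+1)*(q+1)*(i+1)*(p+1)) := by ring
    have e2 : ((p+q)+1)*((i*q*(i+1)*(q+1)) + (p*v*(p+1)*(v+1)))
        = ((q+p)+1)*((v*p*(v+1)*(p+1)) + (q*i*(q+1)*(i+1))) := by ring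
    rw [e1, e2]; exact h
  · right
    have e1 : (p+q)*(v+q)*((i+1)*(p+1)*(v+1)*(q+1))
        = (q+p)*(v+q)*((v+1)*(q+1)*(i+1)*(p+1)) := by ring
    have e2 : ((i+v)+1)*((i*q*(i+1)*(q+1)) + (p*v*(p+1)*(v+1)))
        = ((v+i)+1)*((v*p*(v+1)*(p+1)) + (q*i*(q+1)*(i+1))) := by ring
    rw [e1, e2]; exact h

lemma wrapGen (p q c1 c2 c3 j w : ℕ)
    (hcore : c1 * ((j+1+1)*(p+1)*(w+1+1)*(q+1)) ≤
      c2 * ((j+1)*q*(j+1+1)*(q+1)) + c3 * (p*(w+1)*(p+1)*(w+1+1))) :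
    c1 * ((j+1+p).choose (j+1) * (w+1+q).choose (w+1)) ≤
      c2 * ((j+1+p).choose j * (w+1+q).choose (w+1+1)) +
      c3 * ((j+1+p).choose (j+1+1) * (w+1+q).choose w) := by
  set s := j+1+p with hs
  set t := w+1+q with ht
  have rA : s.choose (j+1) * (j+1) = s.choose j * (p+1) := by
    have h := Nat.choose_succ_right_eq s j
    have e : s - j = p+1 := by omega
    rw [e] at h; exact h
  have rC : s.choose (j+1+1) * (j+1+1) = s.choose (j+1) * p := by
    have h := Nat.choose_succ_right_eq s (j+1)
    have e : s - (j+1) = p := by omega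
    rw [e] at h; exact h
  have rX : t.choose (w+1) * (w+1) = t.choose w * (q+1) := by
    have h := Nat.choose_succ_right_eq t w
    have e : t - w = q+1 := by omega
    rw [e] at h; exact h
  have rZ : t.choose (w+1+1) * (w+1+1) = t.choose (w+1) * q := by
    have h := Nat.choose_succ_right_eq t (w+1)
    have e : t - (w+1) = q := by omega
    rw [e] at h; exact h
  set A := s.choose j
  set B := s.choose (j+1)
  set C := s.choose (j+1+1)
  set X := t.choose w
  set Y := t.choose (w+1)
  set Z := t.choose (w+1+1)
  have hMpos : 0 < (j+1+1)*(p+1)*(w+1+1)*(q+1) := by positivity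
  apply Nat.le_of_mul_le_mul_right _ hMpos
  have e1 : A*Z*((j+1+1)*(p+1)*(w+1+1)*(q+1)) = B*Y*((j+1)*q*(j+1+1)*(q+1)) := by
    calc A*Z*((j+1+1)*(p+1)*(w+1+1)*(q+1))
        = (A*(p+1))*(Z*(w+1+1))*((j+1+1)*(q+1)) := by ring
      _ = (B*(j+1))*(Y*q)*((j+1+1)*(q+1)) := by rw [← rA, rZ]
      _ = B*Y*((j+1)*q*(j+1+1)*(q+1)) := by ring
  have e2 : C*X*((j+1+1)*(p+1)*(w+1+1)*(q+1)) = B*Y*(p*(w+1)*(p+1)*(w+1+1)) := by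
    calc C*X*((j+1+1)*(p+1)*(w+1+1)*(q+1))
        = (C*(j+1+1))*(X*(q+1))*((p+1)*(w+1+1)) := by ring
      _ = (B*p)*(Y*(w+1))*((p+1)*(w+1+1)) := by rw [rC, ← rX]
      _ = B*Y*(p*(w+1)*(p+1)*(w+1+1)) := by ring
  calc c1*(B*Y)*((j+1+1)*(p+1)*(w+1+1)*(q+1))
      = (B*Y)*(c1*((j+1+1)*(p+1)*(w+1+1)*(q+1))) := by ring
    _ ≤ (B*Y)*(c2*((j+1)*q*(j+1+1)*(q+1)) + c3*(p*(w+1)*(p+1)*(w+1+1))) :=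
        Nat.mul_le_mul_left _ hcore
    _ = c2*(B*Y*((j+1)*q*(j+1+1)*(q+1))) + c3*(B*Y*(p*(w+1)*(p+1)*(w+1+1))) := by ring
    _ = c2*(A*Z*((j+1+1)*(p+1)*(w+1+1)*(q+1))) + c3*(C*X*((j+1+1)*(p+1)*(w+1+1)*(q+1))) := by
        rw [e1, e2]
    _ = (c2*(A*Z) + c3*(C*X))*((j+1+1)*(p+1)*(w+1+1)*(q+1)) := by ring

/-- Interior wrapper: reduces a binomial inequality to pure arithmetic. -/
lemma interiorWrap (s t d i c1 c2 c3 : ℕ) (hi : 1 ≤ i) (hid : i < d)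
    (hcore : ∀ p v q : ℕ, s = i + p → d = i + v → t = v + q →
      c1 * ((i+1)*(p+1)*(v+1)*(q+1)) ≤ c2 * (i*q*(i+1)*(q+1)) + c3 * (p*v*(p+1)*(v+1))) :
    c1 * (s.choose i * t.choose (d-i)) ≤
      c2 * (s.choose (i-1) * t.choose (d-i+1)) + c3 * (s.choose (i+1) * t.choose (d-i-1)) := by
  by_cases his : i ≤ s
  case neg =>
    have h0 : s.choose i = 0 := Nat.choose_eq_zero_of_lt (by omega)
    simp [h0]
  by_cases hvt : d - i ≤ t
  case neg =>
    have h0 : t.choose (d-i) = 0 := Nat.choose_eq_zero_of_lt (by omega)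
    simp [h0]
  obtain ⟨j, hj⟩ : ∃ j, i = j + 1 := ⟨i-1, by omega⟩
  obtain ⟨w, hw⟩ : ∃ w, d - i = w + 1 := ⟨d-i-1, by omega⟩
  obtain ⟨p, hp⟩ : ∃ p, s = i + p := ⟨s-i, by omega⟩
  obtain ⟨q, hq⟩ : ∃ q, t = (d-i) + q := ⟨t-(d-i), by omega⟩
  have hc := hcore p (d-i) q hp (by omega) hq
  have hgen := wrapGen p q c1 c2 c3 j w (by
    rw [hw] at hc
    rw [hj] at hc
    exact hc)
  have es : j+1+p = s := by omega
  have ew : w+1+q = t := by omega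
  have e1 : j+1 = i := by omega
  have e2 : w+1 = d-i := by omega
  have e3 : j = i-1 := by omega
  have e4 : w+1+1 = d-i+1 := by omega
  have e5 : j+1+1 = i+1 := by omega
  have e6 : w = d-i-1 := by omega
  rw [es, ew, e5, e1, e3, e4, e2, e6] at hgen
  exact hgen

/-- Boundary wrapper. -/
lemma boundWrap (t d c1 c2 : ℕ) (hd : 1 ≤ d)
    (h : ∀ q, d + q = t → c1 * (q+1) ≤ c2 * d) :
    c1 * t.choose d ≤ c2 * t.choose (d-1) := by
  by_cases hdt : d ≤ t
  · obtain ⟨w, hw⟩ : ∃ w, d = w+1 := ⟨d-1, by omega⟩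
    obtain ⟨q, hq⟩ : ∃ q, t = d + q := ⟨t-d, by omega⟩
    have r : t.choose d * d = t.choose (d-1) * (q+1) := by
      have hh := Nat.choose_succ_right_eq t w
      have e : t - w = q+1 := by omega
      rw [e] at hh
      rw [hw]
      have e2 : w+1-1 = w := by omega
      rw [e2]
      exact hh
    apply Nat.le_of_mul_le_mul_right _ (show 0 < d by omega)
    calc c1 * t.choose d * d = c1 * (t.choose (d-1) * (q+1)) := by rw [mul_assoc, r]
      _ = t.choose (d-1) * (c1 * (q+1)) := by ring
      _ ≤ t.choose (d-1) * (c2 * d) := Nat.mul_le_mul_left _ (h q hq.symm)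
      _ = c2 * t.choose (d-1) * d := by ring
  · have h0 : t.choose d = 0 := Nat.choose_eq_zero_of_lt (by omega)
    simp [h0]

open Finset

lemma sumG_le (s t d : ℕ) :
    (∑ i ∈ (range (d+1)).filter (fun i => ¬ Odd i),
      if 1 ≤ i then s.choose (i-1) * t.choose (d-(i-1)) else 0)
    ≤ ∑ i ∈ (range (d+1)).filter (fun i => Odd i), s.choose i * t.choose (d-i) := by
  classical
  rw [← Finset.sum_filter]
  have hinj : ∀ x ∈ ((range (d+1)).filter (fun i => ¬ Odd i)).filter (fun i => 1 ≤ i),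
      ∀ y ∈ ((range (d+1)).filter (fun i => ¬ Odd i)).filter (fun i => 1 ≤ i),
      x - 1 = y - 1 → x = y := by
    intro x hx y hy hxy
    simp only [mem_filter, mem_range] at hx hy
    omega
  calc (∑ i ∈ ((range (d+1)).filter (fun i => ¬ Odd i)).filter (fun i => 1 ≤ i),
          s.choose (i-1) * t.choose (d-(i-1)))
      = ∑ j ∈ (((range (d+1)).filter (fun i => ¬ Odd i)).filter (fun i => 1 ≤ i)).image
          (fun i => i - 1), s.choose j * t.choose (d-j) :=
        (Finset.sum_image (f := fun j => s.choose j * t.choose (d-j)) hinj).symm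
    _ ≤ _ := by
        apply Finset.sum_le_sum_of_subset
        intro j hj
        simp only [mem_image, mem_filter, mem_range] at hj ⊢
        obtain ⟨i, ⟨⟨hir, hodd⟩, h1⟩, rfl⟩ := hj
        rw [Nat.odd_iff] at hodd ⊢
        omega

lemma sumH_le (s t d : ℕ) :
    (∑ i ∈ (range (d+1)).filter (fun i => ¬ Odd i),
      if i + 1 ≤ d then s.choose (i+1) * t.choose (d-(i+1)) else 0)
    ≤ ∑ i ∈ (range (d+1)).filter (fun i => Odd i), s.choose i * t.choose (d-i) := by
  classical
  rw [← Finset.sum_filter]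
  have hinj : ∀ x ∈ ((range (d+1)).filter (fun i => ¬ Odd i)).filter (fun i => i + 1 ≤ d),
      ∀ y ∈ ((range (d+1)).filter (fun i => ¬ Odd i)).filter (fun i => i + 1 ≤ d),
      x + 1 = y + 1 → x = y := by
    intro x _ y _ hxy
    omega
  calc (∑ i ∈ ((range (d+1)).filter (fun i => ¬ Odd i)).filter (fun i => i + 1 ≤ d),
          s.choose (i+1) * t.choose (d-(i+1)))
      = ∑ j ∈ (((range (d+1)).filter (fun i => ¬ Odd i)).filter (fun i => i + 1 ≤ d)).image
          (fun i => i + 1), s.choose j * t.choose (d-j) :=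
        (Finset.sum_image (f := fun j => s.choose j * t.choose (d-j)) hinj).symm
    _ ≤ _ := by
        apply Finset.sum_le_sum_of_subset
        intro j hj
        simp only [mem_image, mem_filter, mem_range] at hj ⊢
        obtain ⟨i, ⟨⟨hir, hodd⟩, h1⟩, rfl⟩ := hj
        rw [Nat.odd_iff] at hodd ⊢
        omega

lemma vand (s t d : ℕ) :
    ∑ i ∈ range (d+1), s.choose i * t.choose (d-i) = (s+t).choose d := by
  rw [Nat.add_choose_eq, Finset.Nat.sum_antidiagonal_eq_sum_range_succ_mk]

lemma convR (d e c Fi GH : ℕ) (α : ℝ) (hd : 1 ≤ d) (he : 1 ≤ e)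
    (h1 : ((e:ℝ)+1)/d ≤ α) (h2 : ((d:ℝ)+1)/e ≤ α)
    (h : d*c*Fi ≤ (e+1)*GH ∨ e*c*Fi ≤ (d+1)*GH) : (c:ℝ)*Fi ≤ α*GH := by
  have hGH : (0:ℝ) ≤ GH := Nat.cast_nonneg _
  rcases h with h | h
  · have hc : ((d:ℝ))*c*Fi ≤ ((e:ℝ)+1)*GH := by exact_mod_cast h
    have hdpos : (0:ℝ) < d := by exact_mod_cast Nat.lt_of_lt_of_le Nat.zero_lt_one hd
    have hα' : (e:ℝ)+1 ≤ α*d := (div_le_iff₀ hdpos).mp h1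
    have h2' := le_trans hc (mul_le_mul_of_nonneg_right hα' hGH)
    have h3 : (d:ℝ)*((c:ℝ)*Fi) ≤ (d:ℝ)*(α*GH) := by nlinarith [h2']
    exact le_of_mul_le_mul_left h3 hdpos
  · have hc : ((e:ℝ))*c*Fi ≤ ((d:ℝ)+1)*GH := by exact_mod_cast h
    have hepos : (0:ℝ) < e := by exact_mod_cast Nat.lt_of_lt_of_le Nat.zero_lt_one he
    have hα' : (d:ℝ)+1 ≤ α*e := (div_le_iff₀ hepos).mp h2
    have h2' := le_trans hc (mul_le_mul_of_nonneg_right hα' hGH)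
    have h3 : (e:ℝ)*((c:ℝ)*Fi) ≤ (e:ℝ)*(α*GH) := by nlinarith [h2']
    exact le_of_mul_le_mul_left h3 hepos

lemma key2 (s t d e i : ℕ) (hde : d + e = s + t) (hd : 1 ≤ d) (he : 1 ≤ e)
    (hs1 : e + 1 ≤ s*(2*d+1)) (hs2 : d + 1 ≤ s*(2*e+1))
    (ht1 : e + 1 ≤ t*(2*d+1)) (ht2 : d + 1 ≤ t*(2*e+1))
    (hid : i ≤ d) (heven : ¬ Odd i) :
    s.choose i * t.choose (d-i) ≤
      2 * (if 1 ≤ i then s.choose (i-1) * t.choose (d-(i-1)) else 0)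
      + 2 * (if i + 1 ≤ d then s.choose (i+1) * t.choose (d-(i+1)) else 0) := by
  rw [Nat.odd_iff] at heven
  by_cases h0 : i = 0
  · subst h0
    rw [if_neg (by omega), if_pos (by omega)]
    simp only [Nat.sub_zero, Nat.choose_zero_right, one_mul, zero_add, Nat.choose_one_right]
    have hb := boundWrap t d 1 (2*s) hd (fun q hq => by
      have hrw : s*(2*d+1) = 2*(s*d)+s := by ring
      rw [hrw] at hs1
      have h1 : 1*(q+1) ≤ 2*(s*d) := by linarith
      linarith [h1])
    linarith [hb]
  · by_cases hD : i = d
    · subst hD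
      rw [if_pos (by omega), if_neg (by omega)]
      have ed : i - i = 0 := by omega
      have ed2 : i - (i-1) = 1 := by omega
      rw [ed, ed2, Nat.choose_zero_right, Nat.choose_one_right]
      have hb := boundWrap s i 1 (2*t) (by omega) (fun q hq => by
        have hrw : t*(2*i+1) = 2*(t*i)+t := by ring
        rw [hrw] at ht1
        have h1 : 1*(q+1) ≤ 2*(t*i) := by linarith
        linarith [h1])
      linarith [hb]
    · -- interior
      have hi1 : 1 ≤ i := by omega
      have hi2 : 2 ≤ i := by omega
      have hidlt : i < d := by omega
      rw [if_pos hi1, if_pos (by omega : i+1 ≤ d)]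
      have e1 : d-(i-1) = d-i+1 := by omega
      have e2 : d-(i+1) = d-i-1 := by omega
      rw [e1, e2]
      have hI := interiorWrap s t d i 1 2 2 hi1 hidlt (fun p' v' q' hp' hv' hq' => by
        have hE : e = p' + q' := by omega
        have hc := core2 i v' p' q' hi2 (by omega) (by
          have hrw : (i+p')*(2*(p'+q')+1) = s*(2*e+1) := by rw [← hp', ← hE]
          rw [hrw]
          have : i + v' + 1 = d + 1 := by omega
          omega) (by
          have hrw : (v'+q')*(2*(p'+q')+1) = t*(2*e+1) := by rw [← hq', ← hE]
          rw [hrw]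
          have : i + v' + 1 = d + 1 := by omega
          omega)
        linarith [hc])
      linarith [hI]

lemma key1 (s t d e i : ℕ) (hde : d + e = s + t) (hd : 1 ≤ d) (he : 1 ≤ e) (hs0 : 1 ≤ s)
    (Hs : s*(2*d+1) ≤ e ∨ s*(2*e+1) ≤ d) (hid : i ≤ d) :
    d*s*(s.choose i * t.choose (d-i)) ≤
      (e+1)*((if 1 ≤ i then s.choose (i-1) * t.choose (d-(i-1)) else 0)
        + (if i + 1 ≤ d then s.choose (i+1) * t.choose (d-(i+1)) else 0))
    ∨ e*s*(s.choose i * t.choose (d-i)) ≤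
      (d+1)*((if 1 ≤ i then s.choose (i-1) * t.choose (d-(i-1)) else 0)
        + (if i + 1 ≤ d then s.choose (i+1) * t.choose (d-(i+1)) else 0)) := by
  by_cases h0 : i = 0
  · left
    subst h0
    rw [if_neg (by omega), if_pos (by omega)]
    simp only [Nat.sub_zero, Nat.choose_zero_right, one_mul, zero_add, Nat.choose_one_right]
    have hb := boundWrap t d (d*s) ((e+1)*s) hd (fun q hq => by
      have h1 : (q+1)*(s*d) ≤ (e+1)*(s*d) := Nat.mul_le_mul_right _ (by omega)
      nlinarith [h1])
    linarith [hb]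
  · by_cases hD : i = d
    · by_cases hds : d ≤ s
      case neg =>
        left
        have h0' : s.choose i = 0 := Nat.choose_eq_zero_of_lt (by omega)
        simp [h0']
      rcases Hs with Hs | Hs
      · left
        subst hD
        rw [if_pos (by omega), if_neg (by omega)]
        have ed : i - i = 0 := by omega
        have ed2 : i - (i-1) = 1 := by omega
        rw [ed, ed2, Nat.choose_zero_right, Nat.choose_one_right]
        have hrw : s*(2*i+1) = 2*(s*i)+s := by ring
        rw [hrw] at Hs
        have hb := boundWrap s i (i*s) ((e+1)*t) (by omega) (fun q hq => by
          -- goal : i*s*(q+1) ≤ (e+1)*t*i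
          have hts : 2*(s*i) ≤ t := by linarith
          have hss : s ≤ 2*(s*i) := by nlinarith
          have m1 : (s+1)*s ≤ (2*(s*i)+s+1)*(2*(s*i)) := Nat.mul_le_mul (by omega) hss
          have m2 : (2*(s*i)+s+1)*(2*(s*i)) ≤ (e+1)*t := Nat.mul_le_mul (by omega) hts
          have m3 : s*(q+1) ≤ s*(s+1) := Nat.mul_le_mul_left _ (by omega)
          have h1 : s*(q+1) ≤ (e+1)*t := by nlinarith [m1, m2, m3]
          have h2 := Nat.mul_le_mul_left i h1
          nlinarith [h2])
        linarith [hb]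
      · exfalso
        have h3 : s*3 ≤ s*(2*e+1) := Nat.mul_le_mul_left _ (by omega)
        have h4 : s*3 ≤ d := le_trans h3 Hs
        omega
    · -- interior
      have hi1 : 1 ≤ i := by omega
      have hidlt : i < d := by omega
      by_cases his : i ≤ s
      case neg =>
        left
        have h0' : s.choose i = 0 := Nat.choose_eq_zero_of_lt (by omega)
        simp [h0']
      by_cases hvt : d - i ≤ t
      case neg =>
        left
        have h0' : t.choose (d-i) = 0 := Nat.choose_eq_zero_of_lt (by omega)
        simp [h0']
      obtain ⟨p, hp⟩ : ∃ p, s = i + p := ⟨s-i, by omega⟩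
      obtain ⟨v, hv⟩ : ∃ v, d = i + v := ⟨d-i, by omega⟩
      obtain ⟨q, hq⟩ : ∃ q, t = v + q := ⟨t-v, by omega⟩
      have hv1 : 1 ≤ v := by omega
      have hE : e = p + q := by omega
      have H' : (i+p)*(2*(i+v)+1) ≤ p+q ∨ (i+p)*(2*(p+q)+1) ≤ i+v := by
        rcases Hs with Hs | Hs
        · left; rw [← hp, ← hv, ← hE]; exact Hs
        · right; rw [← hp, ← hE, ← hv]; exact Hs
      have e1 : d-(i-1) = d-i+1 := by omega
      have e2 : d-(i+1) = d-i-1 := by omega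
      rcases core1 i v p q hi1 hv1 H' with hcc | hcc
      · left
        rw [if_pos hi1, if_pos (by omega : i+1 ≤ d), e1, e2]
        have hI := interiorWrap s t d i (d*s) (e+1) (e+1) hi1 hidlt (fun p' v' q' hp' hv' hq' => by
          have hpp : p' = p := by omega
          have hvv : v' = v := by omega
          have hqq : q' = q := by omega
          rw [hpp, hvv, hqq]
          have ee1 : d*s = (i+v)*(i+p) := by rw [← hp, ← hv]
          rw [ee1, hE]
          linarith [hcc])
        linarith [hI]
      · right
        rw [if_pos hi1, if_pos (by omega : i+1 ≤ d), e1, e2]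
        have hI := interiorWrap s t d i (e*s) (d+1) (d+1) hi1 hidlt (fun p' v' q' hp' hv' hq' => by
          have hpp : p' = p := by omega
          have hvv : v' = v := by omega
          have hqq : q' = q := by omega
          rw [hpp, hvv, hqq]
          have ee1 : e*s = (p+q)*(i+p) := by rw [← hp, ← hE]
          rw [ee1]
          rw [← hv] at hcc
          linarith [hcc])
        linarith [hI]

lemma key3 (s t d e i : ℕ) (hde : d + e = s + t) (hd : 1 ≤ d) (he : 1 ≤ e) (ht0 : 1 ≤ t)
    (Ht : t*(2*d+1) ≤ e ∨ t*(2*e+1) ≤ d) (hid : i ≤ d) :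
    d*t*(s.choose i * t.choose (d-i)) ≤
      (e+1)*((if 1 ≤ i then s.choose (i-1) * t.choose (d-(i-1)) else 0)
        + (if i + 1 ≤ d then s.choose (i+1) * t.choose (d-(i+1)) else 0))
    ∨ e*t*(s.choose i * t.choose (d-i)) ≤
      (d+1)*((if 1 ≤ i then s.choose (i-1) * t.choose (d-(i-1)) else 0)
        + (if i + 1 ≤ d then s.choose (i+1) * t.choose (d-(i+1)) else 0)) := by
  by_cases hD : i = d
  · left
    subst hD
    by_cases hds : i ≤ s
    case neg =>
      have h0' : s.choose i = 0 := Nat.choose_eq_zero_of_lt (by omega)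
      simp [h0']
    rw [if_pos (by omega)]
    by_cases hii : i + 1 ≤ i
    · omega
    rw [if_neg hii]
    have ed : i - i = 0 := by omega
    have ed2 : i - (i-1) = 1 := by omega
    rw [ed, ed2, Nat.choose_zero_right, Nat.choose_one_right]
    have hb := boundWrap s i (i*t) ((e+1)*t) (by omega) (fun q hq => by
      have h1 : (q+1)*(t*i) ≤ (e+1)*(t*i) := Nat.mul_le_mul_right _ (by omega)
      nlinarith [h1])
    linarith [hb]
  · by_cases h0 : i = 0
    · subst h0
      by_cases hdt : d ≤ t
      case neg =>
        left
        have h0' : t.choose d = 0 := Nat.choose_eq_zero_of_lt (by omega)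
        simp [h0']
      rcases Ht with Ht | Ht
      · left
        rw [if_neg (by omega), if_pos (by omega)]
        simp only [Nat.sub_zero, Nat.choose_zero_right, one_mul, zero_add, Nat.choose_one_right]
        have hrw : t*(2*d+1) = 2*(t*d)+t := by ring
        rw [hrw] at Ht
        have hb := boundWrap t d (d*t) ((e+1)*s) hd (fun q hq => by
          -- goal : d*t*(q+1) ≤ (e+1)*s*d
          have hst : 2*(t*d) ≤ s := by linarith
          have htt : t ≤ 2*(t*d) := by nlinarith
          have m1 : (t+1)*t ≤ (2*(t*d)+t+1)*(2*(t*d)) := Nat.mul_le_mul (by omega) htt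
          have m2 : (2*(t*d)+t+1)*(2*(t*d)) ≤ (e+1)*s := Nat.mul_le_mul (by omega) hst
          have m3 : t*(q+1) ≤ t*(t+1) := Nat.mul_le_mul_left _ (by omega)
          have h1 : t*(q+1) ≤ (e+1)*s := by nlinarith [m1, m2, m3]
          have h2 := Nat.mul_le_mul_left d h1
          nlinarith [h2])
        linarith [hb]
      · exfalso
        have h3 : t*3 ≤ t*(2*e+1) := Nat.mul_le_mul_left _ (by omega)
        have h4 : t*3 ≤ d := le_trans h3 Ht
        omega
    · -- interior
      have hi1 : 1 ≤ i := by omega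
      have hidlt : i < d := by omega
      by_cases his : i ≤ s
      case neg =>
        left
        have h0' : s.choose i = 0 := Nat.choose_eq_zero_of_lt (by omega)
        simp [h0']
      by_cases hvt : d - i ≤ t
      case neg =>
        left
        have h0' : t.choose (d-i) = 0 := Nat.choose_eq_zero_of_lt (by omega)
        simp [h0']
      obtain ⟨p, hp⟩ : ∃ p, s = i + p := ⟨s-i, by omega⟩
      obtain ⟨v, hv⟩ : ∃ v, d = i + v := ⟨d-i, by omega⟩
      obtain ⟨q, hq⟩ : ∃ q, t = v + q := ⟨t-v, by omega⟩
      have hv1 : 1 ≤ v := by omega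
      have hE : e = p + q := by omega
      have H' : (v+q)*(2*(i+v)+1) ≤ p+q ∨ (v+q)*(2*(p+q)+1) ≤ i+v := by
        rcases Ht with Ht | Ht
        · left; rw [← hq, ← hv, ← hE]; exact Ht
        · right; rw [← hq, ← hE, ← hv]; exact Ht
      have e1 : d-(i-1) = d-i+1 := by omega
      have e2 : d-(i+1) = d-i-1 := by omega
      rcases core3 i v p q hi1 hv1 H' with hcc | hcc
      · left
        rw [if_pos hi1, if_pos (by omega : i+1 ≤ d), e1, e2]
        have hI := interiorWrap s t d i (d*t) (e+1) (e+1) hi1 hidlt (fun p' v' q' hp' hv' hq' => by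
          have hpp : p' = p := by omega
          have hvv : v' = v := by omega
          have hqq : q' = q := by omega
          rw [hpp, hvv, hqq]
          have ee1 : d*t = (i+v)*(v+q) := by rw [← hq, ← hv]
          rw [ee1, hE]
          linarith [hcc])
        linarith [hI]
      · right
        rw [if_pos hi1, if_pos (by omega : i+1 ≤ d), e1, e2]
        have hI := interiorWrap s t d i (e*t) (d+1) (d+1) hi1 hidlt (fun p' v' q' hp' hv' hq' => by
          have hpp : p' = p := by omega
          have hvv : v' = v := by omega
          have hqq : q' = q := by omega
          rw [hpp, hvv, hqq]
          have ee1 : e*t = (p+q)*(v+q) := by rw [← hq, ← hE]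
          rw [ee1]
          rw [← hv] at hcc
          linarith [hcc])
        linarith [hI]


set_option maxHeartbeats 2000000 in
theorem stmt1 (k s d : ℕ) (hs1 : 1 ≤ s) (hs2 : s ≤ k - 1) (hd1 : 1 ≤ d) (hd2 : d ≤ k - 1)
    (β : ℕ) (hβ : β = ⌈max (((k : ℝ) - d + 1) / (2 * d + 1))
        (((d : ℝ) + 1) / (2 * ((k : ℝ) - d) + 1))⌉₊)
    (α : ℝ) (hα : α = max (((k : ℝ) - d + 1) / d) (((d : ℝ) + 1) / ((k : ℝ) - d))) :
    (s < β → (2 * s / (5 * α)) * (k.choose d : ℝ) ≤ (oddSum k s d : ℝ)) ∧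
    (β ≤ s → s ≤ k - β → (1 / 5) * (k.choose d : ℝ) ≤ (oddSum k s d : ℝ)) ∧
    (k - β < s → (2 * ((k : ℝ) - s) / (5 * α)) * (k.choose d : ℝ) ≤ (oddSum k s d : ℝ)) := by
  have hk2 : 2 ≤ k := by omega
  set t := k - s with htdef
  set e := k - d with hedef
  have hst : s + t = k := by omega
  have hde : d + e = s + t := by omega
  have ht0 : 1 ≤ t := by omega
  have he : 1 ≤ e := by omega
  have hd : 1 ≤ d := hd1
  have hkd : ((k:ℝ)) - (d:ℝ) = (e:ℝ) := by
    have h1 : (e:ℝ) + (d:ℝ) = (k:ℝ) := by exact_mod_cast (by omega : e + d = k)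
    linarith
  have hdR : (0:ℝ) < d := by exact_mod_cast hd
  have heR : (0:ℝ) < e := by exact_mod_cast he
  have hα1 : ((e:ℝ)+1)/d ≤ α := by
    have h1 : ((k:ℝ) - d + 1)/d = ((e:ℝ)+1)/d := by rw [hkd]
    rw [hα, ← h1]; exact le_max_left _ _
  have hα2 : ((d:ℝ)+1)/e ≤ α := by
    have h1 : ((d:ℝ)+1)/((k:ℝ)-d) = ((d:ℝ)+1)/(e:ℝ) := by rw [hkd]
    rw [hα, ← h1]; exact le_max_right _ _
  have hαpos : 0 < α := lt_of_lt_of_le (by positivity : (0:ℝ) < ((e:ℝ)+1)/d) hα1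
  -- β characterizations
  have hβlt : ∀ n : ℕ, n < β → (n*(2*d+1) ≤ e ∨ n*(2*e+1) ≤ d) := by
    intro n hn
    rw [hβ, Nat.lt_ceil, lt_max_iff] at hn
    rcases hn with hn | hn
    · left
      rw [hkd] at hn
      rw [lt_div_iff₀ (by positivity)] at hn
      have h3 : (n*(2*d+1) : ℕ) < e + 1 := by
        have : (n:ℝ)*(2*(d:ℝ)+1) < (e:ℝ)+1 := hn
        exact_mod_cast (by push_cast; linarith : ((n*(2*d+1) : ℕ):ℝ) < ((e+1 : ℕ):ℝ))
      omega
    · right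
      rw [hkd] at hn
      rw [lt_div_iff₀ (by positivity)] at hn
      have h3 : (n*(2*e+1) : ℕ) < d + 1 := by
        exact_mod_cast (by push_cast; linarith : ((n*(2*e+1) : ℕ):ℝ) < ((d+1 : ℕ):ℝ))
      omega
  have hβge : ∀ n : ℕ, β ≤ n → (e+1 ≤ n*(2*d+1) ∧ d+1 ≤ n*(2*e+1)) := by
    intro n hn
    have h1 : max (((k:ℝ)-d+1)/(2*d+1)) (((d:ℝ)+1)/(2*((k:ℝ)-d)+1)) ≤ (n:ℝ) := by
      calc max (((k:ℝ)-d+1)/(2*d+1)) (((d:ℝ)+1)/(2*((k:ℝ)-d)+1)) ≤ (β:ℝ) := by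
            rw [hβ]; exact Nat.le_ceil _
        _ ≤ (n:ℝ) := by exact_mod_cast hn
    rw [max_le_iff] at h1
    obtain ⟨ha, hb⟩ := h1
    rw [hkd] at ha hb
    rw [div_le_iff₀ (by positivity)] at ha hb
    constructor
    · exact_mod_cast (by push_cast; linarith : (((e+1):ℕ):ℝ) ≤ ((n*(2*d+1) : ℕ):ℝ))
    · exact_mod_cast (by push_cast; linarith : (((d+1):ℕ):ℝ) ≤ ((n*(2*e+1) : ℕ):ℝ))
  -- sums
  have hGle := sumG_le s t d
  have hHle := sumH_le s t d
  have hsplit : (∑ i ∈ (Finset.range (d+1)).filter (fun i => Odd i), s.choose i * t.choose (d-i))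
      + (∑ i ∈ (Finset.range (d+1)).filter (fun i => ¬ Odd i), s.choose i * t.choose (d-i))
      = k.choose d := by
    rw [Finset.sum_filter_add_sum_filter_not, vand, hst]
  have hJ : oddSum k s d
      = ∑ i ∈ (Finset.range (d+1)).filter (fun i => Odd i), s.choose i * t.choose (d-i) := by
    simp only [oddSum]
    rw [Finset.sum_filter]
  have hJ0 : (0:ℝ) ≤ ((∑ i ∈ (Finset.range (d+1)).filter (fun i => Odd i),
      s.choose i * t.choose (d-i) : ℕ):ℝ) := Nat.cast_nonneg _
  refine ⟨?_, ?_, ?_⟩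
  · -- case 1 : s < β
    intro hsβ
    have Hs : s*(2*d+1) ≤ e ∨ s*(2*e+1) ≤ d := hβlt s hsβ
    have keyR : ∀ i ∈ (Finset.range (d+1)).filter (fun i => ¬ Odd i),
        (s:ℝ) * ((s.choose i * t.choose (d-i) : ℕ):ℝ) ≤
        α * ((((if 1 ≤ i then s.choose (i-1) * t.choose (d-(i-1)) else 0)
          + (if i + 1 ≤ d then s.choose (i+1) * t.choose (d-(i+1)) else 0)) : ℕ):ℝ) := by
      intro i hi
      simp only [Finset.mem_filter, Finset.mem_range] at hi
      exact convR d e s _ _ α hd he hα1 hα2 (key1 s t d e i hde hd he hs1 Hs (by omega))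
    have hsumR := Finset.sum_le_sum keyR
    rw [← Finset.mul_sum, ← Finset.mul_sum] at hsumR
    rw [← Nat.cast_sum, ← Nat.cast_sum] at hsumR
    have hGH : (∑ i ∈ (Finset.range (d+1)).filter (fun i => ¬ Odd i),
        ((if 1 ≤ i then s.choose (i-1) * t.choose (d-(i-1)) else 0)
          + (if i + 1 ≤ d then s.choose (i+1) * t.choose (d-(i+1)) else 0)))
        ≤ 2 * (∑ i ∈ (Finset.range (d+1)).filter (fun i => Odd i), s.choose i * t.choose (d-i)) := by
      rw [Finset.sum_add_distrib]
      omega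
    have hsE2 : (s:ℝ) * ((∑ i ∈ (Finset.range (d+1)).filter (fun i => ¬ Odd i),
        s.choose i * t.choose (d-i) : ℕ):ℝ) ≤
        2 * α * ((∑ i ∈ (Finset.range (d+1)).filter (fun i => Odd i),
          s.choose i * t.choose (d-i) : ℕ):ℝ) := by
      have h2 := le_trans hsumR (mul_le_mul_of_nonneg_left
        (show ((∑ i ∈ (Finset.range (d+1)).filter (fun i => ¬ Odd i),
          ((if 1 ≤ i then s.choose (i-1) * t.choose (d-(i-1)) else 0)
          + (if i + 1 ≤ d then s.choose (i+1) * t.choose (d-(i+1)) else 0)) : ℕ):ℝ)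
          ≤ 2 * ((∑ i ∈ (Finset.range (d+1)).filter (fun i => Odd i),
            s.choose i * t.choose (d-i) : ℕ):ℝ) by exact_mod_cast hGH) (le_of_lt hαpos))
      linarith [h2]
    have h2s : 2*(s:ℝ) ≤ α := by
      rcases Hs with Hs' | Hs'
      · have hc : ((s*(2*d+1) : ℕ):ℝ) ≤ (e:ℝ) := by exact_mod_cast Hs'
        push_cast at hc
        have hα1' : (e:ℝ)+1 ≤ α*d := (div_le_iff₀ hdR).mp hα1
        nlinarith [hc, hα1', hdR, Nat.cast_nonneg (α := ℝ) s]
      · have hc : ((s*(2*e+1) : ℕ):ℝ) ≤ (d:ℝ) := by exact_mod_cast Hs'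
        push_cast at hc
        have hα2' : (d:ℝ)+1 ≤ α*e := (div_le_iff₀ heR).mp hα2
        nlinarith [hc, hα2', heR, Nat.cast_nonneg (α := ℝ) s]
    rw [hJ]
    rw [div_mul_eq_mul_div, div_le_iff₀ (by positivity : (0:ℝ) < 5*α)]
    have hCE : ((k.choose d : ℕ):ℝ)
        = ((∑ i ∈ (Finset.range (d+1)).filter (fun i => Odd i), s.choose i * t.choose (d-i) : ℕ):ℝ)
        + ((∑ i ∈ (Finset.range (d+1)).filter (fun i => ¬ Odd i), s.choose i * t.choose (d-i) : ℕ):ℝ) := by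
      exact_mod_cast congrArg (fun x : ℕ => (x:ℝ)) hsplit.symm
    have hexp : 2*(s:ℝ)*((k.choose d : ℕ):ℝ)
        = 2*((s:ℝ) * ((∑ i ∈ (Finset.range (d+1)).filter (fun i => Odd i), s.choose i * t.choose (d-i) : ℕ):ℝ))
        + 2*((s:ℝ) * ((∑ i ∈ (Finset.range (d+1)).filter (fun i => ¬ Odd i), s.choose i * t.choose (d-i) : ℕ):ℝ)) := by
      rw [hCE]; ring
    have m1 := mul_le_mul_of_nonneg_right h2s hJ0
    linarith [hexp, m1, hsE2]
  · -- case 2 : β ≤ s ≤ k - β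
    intro hβs hsk
    obtain ⟨hsc1, hsc2⟩ := hβge s hβs
    have htβ : β ≤ t := by omega
    obtain ⟨htc1, htc2⟩ := hβge t htβ
    have keyN : ∀ i ∈ (Finset.range (d+1)).filter (fun i => ¬ Odd i),
        s.choose i * t.choose (d-i) ≤
        2 * (if 1 ≤ i then s.choose (i-1) * t.choose (d-(i-1)) else 0)
        + 2 * (if i + 1 ≤ d then s.choose (i+1) * t.choose (d-(i+1)) else 0) := by
      intro i hi
      simp only [Finset.mem_filter, Finset.mem_range] at hi
      exact key2 s t d e i hde hd he hsc1 hsc2 htc1 htc2 (by omega) hi.2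
    have hsum := Finset.sum_le_sum keyN
    rw [Finset.sum_add_distrib, ← Finset.mul_sum, ← Finset.mul_sum] at hsum
    have h5 : k.choose d ≤ 5 * (∑ i ∈ (Finset.range (d+1)).filter (fun i => Odd i),
        s.choose i * t.choose (d-i)) := by omega
    rw [hJ]
    have h5R : ((k.choose d : ℕ):ℝ) ≤ 5 * ((∑ i ∈ (Finset.range (d+1)).filter (fun i => Odd i),
        s.choose i * t.choose (d-i) : ℕ):ℝ) := by exact_mod_cast h5
    linarith
  · -- case 3 : k - β < s
    intro hkβ
    have htβ : t < β := by omega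
    have Ht : t*(2*d+1) ≤ e ∨ t*(2*e+1) ≤ d := hβlt t htβ
    have keyR : ∀ i ∈ (Finset.range (d+1)).filter (fun i => ¬ Odd i),
        (t:ℝ) * ((s.choose i * t.choose (d-i) : ℕ):ℝ) ≤
        α * ((((if 1 ≤ i then s.choose (i-1) * t.choose (d-(i-1)) else 0)
          + (if i + 1 ≤ d then s.choose (i+1) * t.choose (d-(i+1)) else 0)) : ℕ):ℝ) := by
      intro i hi
      simp only [Finset.mem_filter, Finset.mem_range] at hi
      exact convR d e t _ _ α hd he hα1 hα2 (key3 s t d e i hde hd he ht0 Ht (by omega))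
    have hsumR := Finset.sum_le_sum keyR
    rw [← Finset.mul_sum, ← Finset.mul_sum] at hsumR
    rw [← Nat.cast_sum, ← Nat.cast_sum] at hsumR
    have hGH : (∑ i ∈ (Finset.range (d+1)).filter (fun i => ¬ Odd i),
        ((if 1 ≤ i then s.choose (i-1) * t.choose (d-(i-1)) else 0)
          + (if i + 1 ≤ d then s.choose (i+1) * t.choose (d-(i+1)) else 0)))
        ≤ 2 * (∑ i ∈ (Finset.range (d+1)).filter (fun i => Odd i), s.choose i * t.choose (d-i)) := by
      rw [Finset.sum_add_distrib]
      omega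
    have hsE2 : (t:ℝ) * ((∑ i ∈ (Finset.range (d+1)).filter (fun i => ¬ Odd i),
        s.choose i * t.choose (d-i) : ℕ):ℝ) ≤
        2 * α * ((∑ i ∈ (Finset.range (d+1)).filter (fun i => Odd i),
          s.choose i * t.choose (d-i) : ℕ):ℝ) := by
      have h2 := le_trans hsumR (mul_le_mul_of_nonneg_left
        (show ((∑ i ∈ (Finset.range (d+1)).filter (fun i => ¬ Odd i),
          ((if 1 ≤ i then s.choose (i-1) * t.choose (d-(i-1)) else 0)
          + (if i + 1 ≤ d then s.choose (i+1) * t.choose (d-(i+1)) else 0)) : ℕ):ℝ)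
          ≤ 2 * ((∑ i ∈ (Finset.range (d+1)).filter (fun i => Odd i),
            s.choose i * t.choose (d-i) : ℕ):ℝ) by exact_mod_cast hGH) (le_of_lt hαpos))
      linarith [h2]
    have h2t : 2*(t:ℝ) ≤ α := by
      rcases Ht with Ht' | Ht'
      · have hc : ((t*(2*d+1) : ℕ):ℝ) ≤ (e:ℝ) := by exact_mod_cast Ht'
        push_cast at hc
        have hα1' : (e:ℝ)+1 ≤ α*d := (div_le_iff₀ hdR).mp hα1
        nlinarith [hc, hα1', hdR, Nat.cast_nonneg (α := ℝ) t]
      · have hc : ((t*(2*e+1) : ℕ):ℝ) ≤ (d:ℝ) := by exact_mod_cast Ht'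
        push_cast at hc
        have hα2' : (d:ℝ)+1 ≤ α*e := (div_le_iff₀ heR).mp hα2
        nlinarith [hc, hα2', heR, Nat.cast_nonneg (α := ℝ) t]
    have hks : (k:ℝ) - (s:ℝ) = (t:ℝ) := by
      have h1 : (s:ℝ) + (t:ℝ) = (k:ℝ) := by exact_mod_cast hst
      linarith
    rw [hJ, hks]
    rw [div_mul_eq_mul_div, div_le_iff₀ (by positivity : (0:ℝ) < 5*α)]
    have hCE : ((k.choose d : ℕ):ℝ)
        = ((∑ i ∈ (Finset.range (d+1)).filter (fun i => Odd i), s.choose i * t.choose (d-i) : ℕ):ℝ)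
        + ((∑ i ∈ (Finset.range (d+1)).filter (fun i => ¬ Odd i), s.choose i * t.choose (d-i) : ℕ):ℝ) := by
      exact_mod_cast congrArg (fun x : ℕ => (x:ℝ)) hsplit.symm
    have hexp : 2*(t:ℝ)*((k.choose d : ℕ):ℝ)
        = 2*((t:ℝ) * ((∑ i ∈ (Finset.range (d+1)).filter (fun i => Odd i), s.choose i * t.choose (d-i) : ℕ):ℝ))
        + 2*((t:ℝ) * ((∑ i ∈ (Finset.range (d+1)).filter (fun i => ¬ Odd i), s.choose i * t.choose (d-i) : ℕ):ℝ)) := by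
      rw [hCE]; ring
    have m1 := mul_le_mul_of_nonneg_right h2t hJ0
    linarith [hexp, m1, hsE2]
end

section
/- Let k ≥ 3 and 2 ≤ D ≤ k be integers, let Ω be the soliton distribution with maximum degree D. Let s be an integer with 1 ≤ s ≤ k/2 such that ⌈κ(s)⌉ ≤ 3, and let n be an integer with n ≥ 35k. Then C(k,s)·e^{−nΣ_s} ≤ 2^k·e^{−k}. -/
open Finset Real

/-- The soliton distribution with maximum degree `D`:
`Ω_1 = 1/D`, `Ω_d = 1/(d(d−1))` for `2 ≤ d ≤ D`, and `Ω_d = 0` otherwise. -/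
noncomputable def soliton (D d : ℕ) : ℝ :=
  if d = 1 then 1 / (D : ℝ)
  else if 2 ≤ d ∧ d ≤ D then 1 / ((d : ℝ) * ((d : ℝ) - 1))
  else 0

/-- `⌈κ(s)⌉` where `κ(s) = (k−s+1)/(2s+1)`. -/
noncomputable def kappaCeil (k s : ℕ) : ℕ := ⌈(((k : ℝ) - s + 1) / (2 * s + 1))⌉₊

/-- `Σ_s = (1/5)·Σ_{d=⌈κ(s)⌉}^{k−⌈κ(s)⌉} Ω_d
      + (2s/5)·( Σ_{d=1}^{⌈κ(s)⌉−1} d·Ω_d/(k−d+1)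
               + Σ_{d=k−⌈κ(s)⌉+1}^{k} (k−d)·Ω_d/(d+1) )`. -/
noncomputable def SigmaS (k : ℕ) (Ω : ℕ → ℝ) (s : ℕ) : ℝ :=
  (1 / 5) * (∑ d ∈ Finset.Icc (kappaCeil k s) (k - kappaCeil k s), Ω d) +
    (2 * s / 5) *
      ((∑ d ∈ Finset.Icc 1 (kappaCeil k s - 1), (d : ℝ) * Ω d / ((k : ℝ) - d + 1)) +
        ∑ d ∈ Finset.Icc (k - kappaCeil k s + 1) k, ((k : ℝ) - d) * Ω d / ((d : ℝ) + 1))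

/-!
Every degree `d ∈ [1, k-1]` enters `Σ_s` with weight at least `1/35`: the middle block has weight
`1/5`, and on the two outer blocks the weights `2s·d/(5(k-d+1))` and `2s·(k-d)/(5(d+1))` are at
least `2s/(5k) ≥ 1/35`, because `⌈κ(s)⌉ ≤ 3` forces `k ≤ 14s`. The soliton distribution puts mass
at least `1 - 1/(k(k-1))` on `[1, k-1]`, so `nΣ_s ≥ k - 1/(k-1) ≥ k - log 2`, and
`C(k,s) ≤ 2^(k-1)` absorbs the factor `2`.
-/

theorem soliton_nonneg (D d : ℕ) : 0 ≤ soliton D d := by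
  unfold soliton
  split_ifs with _ h
  · positivity
  · have hd : (2 : ℝ) ≤ d := by exact_mod_cast h.1
    have : (0 : ℝ) < d * (d - 1) := by nlinarith
    positivity
  · exact le_rfl

theorem sum_Icc_soliton {D m : ℕ} (hD : 1 ≤ D) (hm : 1 ≤ m) :
    ∑ d ∈ Icc 1 m, soliton D d = 1 + 1 / D - 1 / (min D m : ℕ) := by
  induction m, hm using Nat.le_induction with
  | base => simp [soliton, min_eq_right hD]
  | succ m hm ih =>
    rw [sum_Icc_succ_top (by omega), ih]
    rcases le_or_gt (m + 1) D with h | h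
    · have hm0 : (m : ℝ) ≠ 0 := by positivity
      rw [min_eq_right h, min_eq_right (by omega : m ≤ D), soliton, if_neg (by omega),
        if_pos ⟨by omega, h⟩]
      push_cast
      rw [add_sub_cancel_right]
      field_simp
      ring
    · rw [min_eq_left h.le, min_eq_left (by omega : D ≤ m), soliton, if_neg (by omega),
        if_neg (by omega), add_zero]

theorem one_sub_le_sum_Icc_soliton {D k : ℕ} (hD : 2 ≤ D) (hDk : D ≤ k) :
    1 - 1 / (k * (k - 1) : ℝ) ≤ ∑ d ∈ Icc 1 (k - 1), soliton D d := by
  rw [sum_Icc_soliton (by omega) (by omega)]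
  have hk : (2 : ℝ) ≤ k := by exact_mod_cast hD.trans hDk
  rcases hDk.lt_or_eq with h | rfl
  · rw [min_eq_left (by omega : D ≤ k - 1)]
    have : 0 ≤ 1 / (k * (k - 1) : ℝ) := by
      have : (0 : ℝ) ≤ k - 1 := by linarith
      positivity
    linarith
  · rw [min_eq_right (by omega : D - 1 ≤ D), Nat.cast_sub (by omega)]
    have : (D : ℝ) - 1 ≠ 0 := by linarith
    have : 1 / (D : ℝ) - 1 / (D - 1) = -(1 / (D * (D - 1))) := by field_simp; ring
    push_cast
    linarith

theorem one_le_kappaCeil {k s : ℕ} (h : s ≤ k) : 1 ≤ kappaCeil k s := by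
  have : (s : ℝ) ≤ k := by exact_mod_cast h
  exact Nat.one_le_iff_ne_zero.2 (Nat.pos_iff_ne_zero.1 (Nat.ceil_pos.2 (by positivity)))

theorem kappaCeil_le_iff (k s c : ℕ) : kappaCeil k s ≤ c ↔ k + 1 ≤ c * (2 * s + 1) + s := by
  rw [kappaCeil, Nat.ceil_le, div_le_iff₀ (by positivity), ← Nat.cast_le (α := ℝ)]
  push_cast
  constructor <;> intro h <;> linarith

theorem two_mul_kappaCeil_le {k s : ℕ} (hs : 1 ≤ s) (hk : 3 ≤ k) : 2 * kappaCeil k s ≤ k := by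
  have hs' : (1 : ℝ) ≤ s := by exact_mod_cast hs
  have hk' : (3 : ℝ) ≤ k := by exact_mod_cast hk
  have hx : ((k : ℝ) - s + 1) / (2 * s + 1) ≤ k / 3 := by
    rw [div_le_div_iff₀ (by positivity) (by norm_num)]
    nlinarith
  unfold kappaCeil
  rcases le_or_gt (((k : ℝ) - s + 1) / (2 * s + 1)) 0 with h0 | h0
  · rw [Nat.ceil_eq_zero.2 h0]
    omega
  · have := Nat.ceil_lt_add_one h0.le
    have : ((2 * ⌈((k : ℝ) - s + 1) / (2 * s + 1)⌉₊ : ℕ) : ℝ) < k + 1 := by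
      push_cast
      linarith
    exact Nat.lt_succ_iff.1 (by exact_mod_cast this)

theorem sum_Icc_div_35_le_sigmaS {k s : ℕ} {Ω : ℕ → ℝ} (hΩ : ∀ d, 0 ≤ Ω d)
    (hκ1 : 1 ≤ kappaCeil k s) (h2κ : 2 * kappaCeil k s ≤ k) (hk : k ≤ 14 * s) :
    (∑ d ∈ Icc 1 (k - 1), Ω d) / 35 ≤ SigmaS k Ω s := by
  set κ := kappaCeil k s
  have hk' : (k : ℝ) ≤ 14 * s := by exact_mod_cast hk
  have outer_weight : ∀ a b ω : ℝ, 0 ≤ ω → 0 < b → b ≤ 14 * s * a →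
      ω / 35 ≤ 2 * s / 5 * (a * ω / b) := by
    intro a b ω hω hb hab
    rw [mul_div_assoc', le_div_iff₀ hb]
    nlinarith [mul_le_mul_of_nonneg_right hab hω]
  have left : ∑ d ∈ Ico 1 κ, Ω d / 35
      ≤ 2 * s / 5 * ∑ d ∈ Icc 1 (κ - 1), d * Ω d / (k - d + 1) := by
    rw [← Ico_add_one_right_eq_Icc, Nat.sub_add_cancel hκ1, mul_sum]
    refine sum_le_sum fun d hd => outer_weight _ _ _ (hΩ d) ?_ ?_
    all_goals
      have h1 : (1 : ℝ) ≤ d := by exact_mod_cast (mem_Ico.1 hd).1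
      have h2 : (d : ℝ) ≤ k := by exact_mod_cast (by have := (mem_Ico.1 hd).2; omega : d ≤ k)
      nlinarith
  have middle : ∑ d ∈ Ico κ (k - κ + 1), Ω d / 35 ≤ 1 / 5 * ∑ d ∈ Icc κ (k - κ), Ω d := by
    rw [← Ico_add_one_right_eq_Icc, mul_sum]
    exact sum_le_sum fun d _ => by linarith [hΩ d]
  have right : ∑ d ∈ Ico (k - κ + 1) k, Ω d / 35
      ≤ 2 * s / 5 * ∑ d ∈ Icc (k - κ + 1) k, (k - d) * Ω d / (d + 1) := by
    calc ∑ d ∈ Ico (k - κ + 1) k, Ω d / 35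
        ≤ 2 * s / 5 * ∑ d ∈ Ico (k - κ + 1) k, (k - d) * Ω d / (d + 1) := by
          rw [mul_sum]
          refine sum_le_sum fun d hd => outer_weight _ _ _ (hΩ d) (by positivity) ?_
          have : (d : ℝ) + 1 ≤ k := by exact_mod_cast (mem_Ico.1 hd).2
          nlinarith
      _ ≤ 2 * s / 5 * ∑ d ∈ Icc (k - κ + 1) k, (k - d) * Ω d / (d + 1) := by
          refine mul_le_mul_of_nonneg_left (sum_le_sum_of_subset_of_nonneg Ico_subset_Icc_self
            fun d hd _ => ?_) (by positivity)
          have : (d : ℝ) ≤ k := by exact_mod_cast (mem_Icc.1 hd).2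
          have := hΩ d
          apply div_nonneg <;> nlinarith
  have split : (∑ d ∈ Icc 1 (k - 1), Ω d) / 35 = ∑ d ∈ Ico 1 κ, Ω d / 35
      + ∑ d ∈ Ico κ (k - κ + 1), Ω d / 35 + ∑ d ∈ Ico (k - κ + 1) k, Ω d / 35 := by
    rw [sum_Ico_consecutive _ hκ1 (by omega), sum_Ico_consecutive _ (by omega) (by omega),
      ← Ico_add_one_right_eq_Icc, Nat.sub_add_cancel (by omega), sum_div]
  rw [split, SigmaS]
  linarith

theorem stmt5 (k D : ℕ) (hk : 3 ≤ k) (hD2 : 2 ≤ D) (hDk : D ≤ k)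
    (s : ℕ) (hs1 : 1 ≤ s) (hs2 : 2 * s ≤ k) (hκ : kappaCeil k s ≤ 3)
    (n : ℕ) (hn : 35 * k ≤ n) :
    (k.choose s : ℝ) * Real.exp (-(n : ℝ) * SigmaS k (soliton D) s) ≤
      (2 : ℝ) ^ k * Real.exp (-(k : ℝ)) := by
  have hk14 : k ≤ 14 * s := by have := (kappaCeil_le_iff k s 3).1 hκ; omega
  have h_sigma : (1 - 1 / (k * (k - 1) : ℝ)) / 35 ≤ SigmaS k (soliton D) s :=
    (div_le_div_of_nonneg_right (one_sub_le_sum_Icc_soliton hD2 hDk) (by norm_num)).trans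
      (sum_Icc_div_35_le_sigmaS (soliton_nonneg D) (one_le_kappaCeil (by omega))
        (two_mul_kappaCeil_le hs1 hk) hk14)
  have hk' : (3 : ℝ) ≤ k := by exact_mod_cast hk
  have hn_sigma : (k : ℝ) - log 2 ≤ n * SigmaS k (soliton D) s := by
    have : 1 / (k * (k - 1) : ℝ) ≤ 1 := by rw [div_le_one (by nlinarith)]; nlinarith
    calc (k : ℝ) - log 2 ≤ k - 1 / (k - 1) := by
          have : 1 / ((k : ℝ) - 1) ≤ 1 / 2 := one_div_le_one_div_of_le (by norm_num) (by linarith)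
          linarith [log_two_gt_d9]
      _ = 35 * k * ((1 - 1 / (k * (k - 1) : ℝ)) / 35) := by
          have : (k : ℝ) - 1 ≠ 0 := by linarith
          field_simp
      _ ≤ n * SigmaS k (soliton D) s :=
          mul_le_mul (by exact_mod_cast hn) h_sigma (by linarith) (by positivity)
  have hC : (k.choose s : ℝ) ≤ 2 ^ (k - 1) := by
    have := Nat.choose_succ_le_two_pow (k - 1) s
    rw [Nat.sub_add_cancel (by omega)] at this
    exact_mod_cast this
  calc (k.choose s : ℝ) * exp (-n * SigmaS k (soliton D) s)
      ≤ 2 ^ (k - 1) * exp (log 2 - k) := by gcongr; linarith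
    _ = 2 ^ k * exp (-k) := by
      rw [sub_eq_add_neg, exp_add, exp_log two_pos, ← mul_assoc, ← pow_succ,
        Nat.sub_add_cancel (by omega)]
end

section
/- Let k, n ≥ 1 be integers, let Ω be a query-degree distribution on {1,…,k}, and let A be the random n×k sampling matrix over ZMod 2 with i.i.d. query rows drawn from Ω. Then: (1) for any fixed nonzero x ∈ (ZMod 2)^k of Hamming weight s, the probability that a single query row v satisfies v·x = 0 in ZMod 2 equals Σ_{d=1}^{k} Ω_d · ( Σ_{i ≤ d, i even} C(s,i)·C(k−s, d−i) ) / C(k,d); and (2) consequently, the probability that A has a nontrivial kernel satisfies Pr( ∃ x ≠ 0 in (ZMod 2)^k with A·x = 0 ) ≤ Σ_{s=1}^{k} C(k,s) · ( Σ_{d=1}^{k} Ω_d · ( Σ_{i ≤ d, i even} C(s,i)·C(k−s, d−i) ) / C(k,d) )^n. -/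
open Finset MeasureTheory

instance : MeasurableSpace (ZMod 2) := ⊤
instance : MeasurableSingletonClass (ZMod 2) := ⟨fun _ => trivial⟩

/-- The probability weight of a row `v`: a row is the indicator vector of a uniformly random
`d`-element subset of the `k` coordinates, with `d` drawn according to `Ω`. -/
noncomputable def rowWeight (k : ℕ) (Ω : ℕ → ℝ) (v : Fin k → ZMod 2) : ℝ :=
  if hammingNorm v = 0 then 0 else Ω (hammingNorm v) / (Nat.choose k (hammingNorm v) : ℝ)

/-- The distribution of a single random query row in `(ZMod 2)^k`. -/
noncomputable def rowMeasure (k : ℕ) (Ω : ℕ → ℝ) : Measure (Fin k → ZMod 2) :=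
  ∑ v : Fin k → ZMod 2, ENNReal.ofReal (rowWeight k Ω v) • Measure.dirac v

/-- The distribution of the random `n × k` sampling matrix with i.i.d. rows. -/
noncomputable def matrixMeasure (k n : ℕ) (Ω : ℕ → ℝ) :
    Measure (Fin n → Fin k → ZMod 2) :=
  Measure.pi fun _ : Fin n => rowMeasure k Ω

/-- `Σ_{i ≤ d, i even} C(s,i)·C(k−s, d−i)`. -/
def evenSum (k s d : ℕ) : ℕ :=
  ∑ i ∈ Finset.range (d + 1), if Even i then s.choose i * (k - s).choose (d - i) else 0

section Aux

lemma card_inter_eq (k d i : ℕ) (T : Finset (Fin k)) (hid : i ≤ d) :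
    #(((univ : Finset (Fin k)).powersetCard d).filter fun V => #(V ∩ T) = i)
      = (#T).choose i * (#(Tᶜ)).choose (d - i) := by
  rw [← Finset.card_powersetCard i T, ← Finset.card_powersetCard (d - i) Tᶜ,
    ← Finset.card_product]
  apply Finset.card_bij' (i := fun V _ => (V ∩ T, V \ T)) (j := fun P _ => P.1 ∪ P.2)
  · intro V hV
    simp only [Finset.mem_filter, Finset.mem_powersetCard] at hV
    obtain ⟨⟨-, hcard⟩, hi⟩ := hV
    simp only [Finset.mem_product, Finset.mem_powersetCard]
    refine ⟨⟨inter_subset_right, hi⟩, fun a ha => ?_, ?_⟩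
    · simp only [Finset.mem_sdiff] at ha
      simpa using ha.2
    · have := Finset.card_sdiff_add_card_inter V T
      omega
  · intro P hP
    simp only [Finset.mem_product, Finset.mem_powersetCard] at hP
    obtain ⟨⟨hA, hAc⟩, hB, hBc⟩ := hP
    have hdisj : Disjoint P.1 P.2 := by
      refine Finset.disjoint_left.2 fun a haA haB => ?_
      exact (by simpa using hB haB : a ∉ T) (hA haA)
    simp only [Finset.mem_filter, Finset.mem_powersetCard]
    have hPT : (P.1 ∪ P.2) ∩ T = P.1 := by
      ext a
      simp only [Finset.mem_inter, Finset.mem_union]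
      constructor
      · rintro ⟨h1 | h2, hT⟩
        · exact h1
        · exact absurd hT (by simpa using hB h2)
      · intro h; exact ⟨Or.inl h, hA h⟩
    refine ⟨⟨Finset.subset_univ _, ?_⟩, by rw [hPT, hAc]⟩
    rw [Finset.card_union_of_disjoint hdisj, hAc, hBc]
    omega
  · intro V hV
    ext a
    simp only [Finset.mem_union, Finset.mem_inter, Finset.mem_sdiff]
    tauto
  · intro P hP
    simp only [Finset.mem_product, Finset.mem_powersetCard] at hP
    obtain ⟨⟨hA, hAc⟩, hB, hBc⟩ := hP
    have hPT : (P.1 ∪ P.2) ∩ T = P.1 := by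
      ext a
      simp only [Finset.mem_inter, Finset.mem_union]
      constructor
      · rintro ⟨h1 | h2, hT⟩
        · exact h1
        · exact absurd hT (by simpa using hB h2)
      · intro h; exact ⟨Or.inl h, hA h⟩
    have hPB : (P.1 ∪ P.2) \ T = P.2 := by
      ext a
      simp only [Finset.mem_sdiff, Finset.mem_union]
      constructor
      · rintro ⟨h1 | h2, hT⟩
        · exact absurd (hA h1) hT
        · exact h2
      · intro h; exact ⟨Or.inr h, by simpa using hB h⟩
    rw [hPT, hPB]

lemma card_even_inter (k d : ℕ) (T : Finset (Fin k)) :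
    #(((univ : Finset (Fin k)).powersetCard d).filter fun V => Even #(V ∩ T))
      = evenSum k (#T) d := by
  set P := (univ : Finset (Fin k)).powersetCard d with hP
  have hmaps : ∀ V ∈ P.filter fun V => Even #(V ∩ T), #(V ∩ T) ∈ Finset.range (d + 1) := by
    intro V hV
    simp only [Finset.mem_filter, Finset.mem_powersetCard, hP] at hV
    have : #(V ∩ T) ≤ #V := Finset.card_le_card Finset.inter_subset_left
    simp only [Finset.mem_range]
    omega
  rw [Finset.card_eq_sum_card_fiberwise hmaps, evenSum]
  refine Finset.sum_congr rfl fun i hi => ?_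
  simp only [Finset.mem_range] at hi
  by_cases he : Even i
  · simp only [he, if_true]
    have hcompl : #(Tᶜ) = k - #T := by rw [Finset.card_compl, Fintype.card_fin]
    rw [← hcompl, ← card_inter_eq k d i T (by omega), Finset.filter_filter]
    congr 1
    apply Finset.filter_congr
    intro V hV
    constructor
    · rintro ⟨-, h⟩; exact h
    · intro h; exact ⟨h ▸ he, h⟩
  · simp only [he, if_false]
    rw [Finset.card_eq_zero, Finset.filter_filter]
    apply Finset.filter_false_of_mem
    rintro V hV ⟨hEv, hEq⟩
    exact he (hEq ▸ hEv)

def suppEquiv (k : ℕ) : (Fin k → ZMod 2) ≃ Finset (Fin k) where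
  toFun v := univ.filter fun j => v j = 1
  invFun V := fun j => if j ∈ V then 1 else 0
  left_inv v := by
    funext j
    have h : ∀ a : ZMod 2, (if a = 1 then (1 : ZMod 2) else 0) = a := by decide
    simp only [Finset.mem_filter, Finset.mem_univ, true_and]
    exact h (v j)
  right_inv V := by
    ext j
    simp [Finset.mem_filter]

lemma hammingNorm_eq_card (k : ℕ) (v : Fin k → ZMod 2) :
    hammingNorm v = #(suppEquiv k v) := by
  have h : ∀ a : ZMod 2, a ≠ 0 ↔ a = 1 := by decide
  simp only [hammingNorm, suppEquiv, Equiv.coe_fn_mk]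
  congr 1
  apply Finset.filter_congr
  intro j _
  exact h (v j)

lemma dot_zero_iff (k : ℕ) (v x : Fin k → ZMod 2) :
    (∑ j, v j * x j = 0) ↔ Even #(suppEquiv k v ∩ suppEquiv k x) := by
  have h : ∀ a b : ZMod 2, a * b = if a = 1 ∧ b = 1 then 1 else 0 := by decide
  have h1 : ∀ j, v j * x j = if v j = 1 ∧ x j = 1 then (1 : ZMod 2) else 0 := fun j => h _ _
  rw [Finset.sum_congr rfl fun j _ => h1 j, Finset.sum_boole]
  have he : (univ.filter fun j => v j = 1 ∧ x j = 1) = suppEquiv k v ∩ suppEquiv k x := by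
    simp only [suppEquiv, Equiv.coe_fn_mk]
    ext j
    simp [Finset.mem_inter, Finset.mem_filter]
  rw [he, ZMod.natCast_eq_zero_iff, even_iff_two_dvd]

lemma sum_rowWeight (k : ℕ) (Ω : ℕ → ℝ) (x : Fin k → ZMod 2) :
    ∑ v ∈ univ.filter (fun v : Fin k → ZMod 2 => ∑ j, v j * x j = 0), rowWeight k Ω v
      = ∑ d ∈ Icc 1 k, Ω d * (evenSum k (hammingNorm x) d : ℝ) / (k.choose d : ℝ) := by
  set T := suppEquiv k x with hT
  have step1 : ∑ v ∈ univ.filter (fun v : Fin k → ZMod 2 => ∑ j, v j * x j = 0),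
        rowWeight k Ω v
      = ∑ V ∈ univ.filter (fun V : Finset (Fin k) => Even #(V ∩ T)),
          (if #V = 0 then 0 else Ω #V / (k.choose #V : ℝ)) := by
    apply Finset.sum_equiv (suppEquiv k)
    · intro v
      simp only [Finset.mem_filter, Finset.mem_univ, true_and]
      exact dot_zero_iff k v x
    · intro v _
      rw [rowWeight, hammingNorm_eq_card]
  rw [step1]
  have hmaps : ∀ V ∈ univ.filter (fun V : Finset (Fin k) => Even #(V ∩ T)),
      #V ∈ Finset.range (k + 1) := by
    intro V _
    have := Finset.card_le_univ V
    simp only [Finset.card_univ, Fintype.card_fin] at this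
    simp only [Finset.mem_range]
    omega
  rw [← Finset.sum_fiberwise_of_maps_to hmaps]
  have inner : ∀ d ∈ Finset.range (k + 1),
      ∑ V ∈ (univ.filter (fun V : Finset (Fin k) => Even #(V ∩ T))).filter (fun V => #V = d),
        (if #V = 0 then 0 else Ω #V / (k.choose #V : ℝ))
      = (evenSum k (#T) d : ℝ) * (if d = 0 then 0 else Ω d / (k.choose d : ℝ)) := by
    intro d _
    have hset : (univ.filter (fun V : Finset (Fin k) => Even #(V ∩ T))).filter (fun V => #V = d)
        = ((univ : Finset (Fin k)).powersetCard d).filter fun V => Even #(V ∩ T) := by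
      ext V
      simp only [Finset.mem_filter, Finset.mem_univ, true_and, Finset.mem_powersetCard,
        Finset.subset_univ]
      tauto
    have hval : ∀ V ∈ (univ.filter (fun V : Finset (Fin k) => Even #(V ∩ T))).filter
        (fun V => #V = d), (if #V = 0 then 0 else Ω #V / (k.choose #V : ℝ))
          = (if d = 0 then 0 else Ω d / (k.choose d : ℝ)) := by
      intro V hV
      simp only [Finset.mem_filter] at hV
      rw [hV.2]
    rw [Finset.sum_congr rfl hval, Finset.sum_const, hset, card_even_inter,
      nsmul_eq_mul]
  rw [Finset.sum_congr rfl inner, hammingNorm_eq_card, ← hT]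
  have hss := Finset.sum_subset (f := fun d => (evenSum k (#T) d : ℝ) *
      if d = 0 then 0 else Ω d / (k.choose d : ℝ))
    (s₁ := Finset.Icc 1 k) (s₂ := Finset.range (k + 1))
    (by intro d hd
        simp only [Finset.mem_Icc] at hd
        simp only [Finset.mem_range]
        omega)
    (by intro d hd hd'
        simp only [Finset.mem_range] at hd
        simp only [Finset.mem_Icc] at hd'
        have : d = 0 := by omega
        simp [this])
  rw [← hss]
  refine Finset.sum_congr rfl fun d hd => ?_
  simp only [Finset.mem_Icc] at hd
  have hne : d ≠ 0 := by omega
  simp only [hne, if_false, ite_false]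
  ring

lemma rowWeight_nonneg (k : ℕ) (Ω : ℕ → ℝ) (hΩ0 : ∀ d ∈ Finset.Icc 1 k, 0 ≤ Ω d)
    (v : Fin k → ZMod 2) : 0 ≤ rowWeight k Ω v := by
  rw [rowWeight]
  split_ifs with h
  · exact le_refl 0
  · have hle : hammingNorm v ≤ k := by
      rw [hammingNorm_eq_card]
      simpa using Finset.card_le_univ (suppEquiv k v)
    exact div_nonneg (hΩ0 _ (Finset.mem_Icc.mpr ⟨Nat.one_le_iff_ne_zero.mpr h, hle⟩))
      (Nat.cast_nonneg _)

lemma pval_nonneg (k : ℕ) (Ω : ℕ → ℝ) (hΩ0 : ∀ d ∈ Finset.Icc 1 k, 0 ≤ Ω d) (s : ℕ) :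
    0 ≤ ∑ d ∈ Icc 1 k, Ω d * (evenSum k s d : ℝ) / (k.choose d : ℝ) := by
  apply Finset.sum_nonneg
  intro d hd
  have := hΩ0 d hd
  positivity

lemma measurableSet_all {k : ℕ} (S : Set (Fin k → ZMod 2)) : MeasurableSet S :=
  S.to_countable.measurableSet

lemma rowMeasure_apply_pred (k : ℕ) (Ω : ℕ → ℝ) (p : (Fin k → ZMod 2) → Prop)
    [DecidablePred p] :
    rowMeasure k Ω {v | p v} = ∑ v ∈ univ.filter p, ENNReal.ofReal (rowWeight k Ω v) := by
  rw [rowMeasure]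
  simp only [Measure.coe_finset_sum, Finset.sum_apply, Measure.smul_apply, smul_eq_mul]
  rw [Finset.sum_filter]
  refine Finset.sum_congr rfl fun v _ => ?_
  rw [Measure.dirac_apply' v (measurableSet_all _)]
  by_cases h : p v
  · simp [Set.indicator_apply, h]
  · simp [Set.indicator_apply, h]

lemma rowMeasure_dot_zero (k : ℕ) (Ω : ℕ → ℝ) (hΩ0 : ∀ d ∈ Finset.Icc 1 k, 0 ≤ Ω d)
    (x : Fin k → ZMod 2) :
    rowMeasure k Ω {v : Fin k → ZMod 2 | ∑ j, v j * x j = 0} =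
      ENNReal.ofReal
        (∑ d ∈ Finset.Icc 1 k, Ω d * (evenSum k (hammingNorm x) d : ℝ) / (k.choose d : ℝ)) := by
  rw [rowMeasure_apply_pred k Ω (fun v => ∑ j, v j * x j = 0), ← sum_rowWeight k Ω x,
    ENNReal.ofReal_sum_of_nonneg (fun v _ => rowWeight_nonneg k Ω hΩ0 v)]

lemma card_weight (k s : ℕ) :
    #(univ.filter fun v : Fin k → ZMod 2 => hammingNorm v = s) = k.choose s := by
  have h1 : #((univ : Finset (Fin k)).powersetCard s) = k.choose s := by
    rw [Finset.card_powersetCard, Finset.card_univ, Fintype.card_fin]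
  rw [← h1]
  apply Finset.card_bij' (i := fun v _ => suppEquiv k v) (j := fun V _ => (suppEquiv k).symm V)
  · intro v hv
    simp only [Finset.mem_filter, Finset.mem_univ, true_and] at hv
    simp only [Finset.mem_powersetCard, Finset.subset_univ, true_and]
    rw [← hammingNorm_eq_card, hv]
  · intro V hV
    simp only [Finset.mem_powersetCard, Finset.subset_univ, true_and] at hV
    simp only [Finset.mem_filter, Finset.mem_univ, true_and]
    rw [hammingNorm_eq_card, Equiv.apply_symm_apply, hV]
  · intro v _; exact (suppEquiv k).symm_apply_apply v
  · intro V _; exact (suppEquiv k).apply_symm_apply V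

instance rowMeasure_finite (k : ℕ) (Ω : ℕ → ℝ) : IsFiniteMeasure (rowMeasure k Ω) := by
  constructor
  have h : (Set.univ : Set (Fin k → ZMod 2)) = {v | (fun _ => True) v} := by simp
  rw [h, rowMeasure_apply_pred]
  exact ENNReal.sum_lt_top.mpr fun _ _ => ENNReal.ofReal_lt_top

end Aux

theorem stmt16 (k n : ℕ) (hk : 1 ≤ k) (hn : 1 ≤ n)
    (Ω : ℕ → ℝ) (hΩ0 : ∀ d ∈ Finset.Icc 1 k, 0 ≤ Ω d)
    (hΩ1 : ∑ d ∈ Finset.Icc 1 k, Ω d = 1) :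
    -- (1) for a fixed nonzero `x` of Hamming weight `s`, the probability that a single query
    -- row `v` satisfies `v·x = 0` equals `Σ_d Ω_d · I_d / C(k,d)`
    (∀ (x : Fin k → ZMod 2) (s : ℕ), x ≠ 0 → hammingNorm x = s →
      rowMeasure k Ω {v : Fin k → ZMod 2 | ∑ j, v j * x j = 0} =
        ENNReal.ofReal
          (∑ d ∈ Finset.Icc 1 k, Ω d * (evenSum k s d : ℝ) / (k.choose d : ℝ))) ∧
    -- (2) union bound on the probability that `A` has a nontrivial kernel
    matrixMeasure k n Ω
        {A : Fin n → Fin k → ZMod 2 |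
          ∃ x : Fin k → ZMod 2, x ≠ 0 ∧ ∀ i, ∑ j, A i j * x j = 0} ≤
      ENNReal.ofReal
        (∑ s ∈ Finset.Icc 1 k, (k.choose s : ℝ) *
          (∑ d ∈ Finset.Icc 1 k, Ω d * (evenSum k s d : ℝ) / (k.choose d : ℝ)) ^ n) := by
  classical
  have part1 : ∀ (x : Fin k → ZMod 2) (s : ℕ), x ≠ 0 → hammingNorm x = s →
      rowMeasure k Ω {v : Fin k → ZMod 2 | ∑ j, v j * x j = 0} =
        ENNReal.ofReal
          (∑ d ∈ Finset.Icc 1 k, Ω d * (evenSum k s d : ℝ) / (k.choose d : ℝ)) := by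
    intro x s hx hs
    rw [rowMeasure_dot_zero k Ω hΩ0 x, hs]
  refine ⟨part1, ?_⟩
  set p : ℕ → ℝ := fun s => ∑ d ∈ Finset.Icc 1 k, Ω d * (evenSum k s d : ℝ) / (k.choose d : ℝ)
    with hp
  have hE : {A : Fin n → Fin k → ZMod 2 | ∃ x : Fin k → ZMod 2, x ≠ 0 ∧ ∀ i, ∑ j, A i j * x j = 0}
      ⊆ ⋃ x ∈ univ.filter (fun x : Fin k → ZMod 2 => x ≠ 0),
          {A : Fin n → Fin k → ZMod 2 | ∀ i, ∑ j, A i j * x j = 0} := by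
    rintro A ⟨x, hx, hAx⟩
    simp only [Set.mem_iUnion]
    exact ⟨x, by simp [hx], hAx⟩
  refine le_trans (measure_mono hE) (le_trans (measure_biUnion_finset_le _ _) ?_)
  have hEx : ∀ x ∈ univ.filter (fun x : Fin k → ZMod 2 => x ≠ 0),
      matrixMeasure k n Ω {A : Fin n → Fin k → ZMod 2 | ∀ i, ∑ j, A i j * x j = 0}
        = ENNReal.ofReal (p (hammingNorm x)) ^ n := by
    intro x hx
    simp only [Finset.mem_filter, Finset.mem_univ, true_and] at hx
    have hset : {A : Fin n → Fin k → ZMod 2 | ∀ i, ∑ j, A i j * x j = 0}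
        = Set.univ.pi fun _ : Fin n => {v : Fin k → ZMod 2 | ∑ j, v j * x j = 0} := by
      ext A
      simp [Set.mem_pi]
    rw [matrixMeasure, hset, Measure.pi_pi, Finset.prod_const,
      rowMeasure_dot_zero k Ω hΩ0 x, Finset.card_univ, Fintype.card_fin]
  rw [Finset.sum_congr rfl hEx]
  have hmaps : ∀ x ∈ univ.filter (fun x : Fin k → ZMod 2 => x ≠ 0),
      hammingNorm x ∈ Finset.Icc 1 k := by
    intro x hx
    simp only [Finset.mem_filter, Finset.mem_univ, true_and] at hx
    have h1 : hammingNorm x ≠ 0 := fun h => hx (hammingNorm_eq_zero.mp h)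
    have h2 : hammingNorm x ≤ k := by
      rw [hammingNorm_eq_card]
      simpa using Finset.card_le_univ (suppEquiv k x)
    simp only [Finset.mem_Icc]
    omega
  rw [← Finset.sum_fiberwise_of_maps_to hmaps]
  have hinner : ∀ s ∈ Finset.Icc 1 k,
      ∑ x ∈ (univ.filter (fun x : Fin k → ZMod 2 => x ≠ 0)).filter
          (fun x => hammingNorm x = s),
        ENNReal.ofReal (p (hammingNorm x)) ^ n
      = ENNReal.ofReal ((k.choose s : ℝ) * p s ^ n) := by
    intro s hs
    simp only [Finset.mem_Icc] at hs
    have hfeq : (univ.filter (fun x : Fin k → ZMod 2 => x ≠ 0)).filter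
        (fun x => hammingNorm x = s)
        = univ.filter (fun x : Fin k → ZMod 2 => hammingNorm x = s) := by
      rw [Finset.filter_filter]
      apply Finset.filter_congr
      intro x _
      constructor
      · rintro ⟨-, h⟩; exact h
      · intro h
        refine ⟨fun h0 => ?_, h⟩
        rw [h0] at h
        simp only [hammingNorm_zero] at h
        omega
    have hval : ∀ x ∈ (univ.filter (fun x : Fin k → ZMod 2 => x ≠ 0)).filter
        (fun x => hammingNorm x = s),
        ENNReal.ofReal (p (hammingNorm x)) ^ n = ENNReal.ofReal (p s) ^ n := by
      intro x hx
      simp only [Finset.mem_filter] at hx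
      rw [hx.2]
    rw [Finset.sum_congr rfl hval, Finset.sum_const, hfeq, card_weight, nsmul_eq_mul,
      ← ENNReal.ofReal_pow (pval_nonneg k Ω hΩ0 s), ← ENNReal.ofReal_natCast,
      ← ENNReal.ofReal_mul (Nat.cast_nonneg _)]
  rw [Finset.sum_congr rfl hinner,
    ← ENNReal.ofReal_sum_of_nonneg (fun s _ => mul_nonneg (Nat.cast_nonneg _)
      (pow_nonneg (pval_nonneg k Ω hΩ0 s) n))]
end
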